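/- Suppose in addition that ∫ : Ω^k → ℂ is a closed graded trace: ∫ ω_1 ω_2 = (−1)^{j(k−j)} ∫ ω_2 ω_1 for ω_1 ∈ Ω^j, ω_2 ∈ Ω^{k−j}, and ∫ dω = 0 for ω ∈ Ω^{k−1}. Define Φ(T) = ∫ T_{11} − (−1)^m ∫ T_{22} θ for T homogeneous of degree m = k. Then Φ is a closed graded trace on (˜Ω, *, δ): Φ(δS) = 0 for every S homogeneous of degree k−1, and Φ(T * T') = (−1)^{m m'} Φ(T' * T) for all homogeneous T, T' of degrees m, m' with m + m' = k. -/

import Mathlib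

/-! Both identities are entrywise computations. For closedness, `∫ dS₁₁` and
`∫ (dS₂₂) θ = ∫ d(S₂₂ θ)` vanish because `dθ = 0`, the `S₁₂ θ` terms cancel, and what is
left, `∫ S₂₁ θ − ∫ θ S₂₁`, vanishes because `θ` has even degree. For the trace property, each
of the four products making up `Φ(T * T')` is moved across by the graded trace; the
off-diagonal ones pair degrees `m − 1` and `m' + 1`, and the sign
`(−1)^{(m−1)(m'+1)} = −(−1)^{mm'}(−1)^k` is exactly what turns a `T₁₁`-contribution of `Φ`
into a `T₂₂ θ`-contribution and back. -/

namespace XTrick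

/-- The data entering Connes' `X`-trick: a nonnegatively graded unital complex
algebra `Ω = ⊕_{j≥0} Ω^j` (graded by submodules `G j`, with `G j = 0` for
`j < 0`), a degree-one map `d` satisfying the graded Leibniz rule, and a
curvature `θ ∈ Ω²` with `dθ = 0` and `d²ω = θω − ωθ`. -/
structure XData (Ω : Type*) [Ring Ω] [Algebra ℂ Ω] : Type _ where
  /-- the grading `G j = Ω^j` -/
  G : ℤ → Submodule ℂ Ω
  neg_bot : ∀ j : ℤ, j < 0 → G j = ⊥
  one_mem : (1 : Ω) ∈ G 0
  mul_mem : ∀ {j j' : ℤ} {x y : Ω}, x ∈ G j → y ∈ G j' → x * y ∈ G (j + j')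
  /-- the degree-one map `d` -/
  d : Ω →ₗ[ℂ] Ω
  d_mem : ∀ {j : ℤ} {x : Ω}, x ∈ G j → d x ∈ G (j + 1)
  leibniz : ∀ {j : ℤ} {x : Ω}, x ∈ G j → ∀ y : Ω,
    d (x * y) = d x * y + ((-1 : ℂ) ^ j) • (x * d y)
  /-- the curvature `θ` -/
  theta : Ω
  theta_mem : theta ∈ G 2
  d_theta : d theta = 0
  d_sq : ∀ x : Ω, d (d x) = theta * x - x * theta

noncomputable section

variable {Ω : Type*} [Ring Ω] [Algebra ℂ Ω]

/-- The matrix `Θ = diag(1, θ)`. -/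
def XData.ThetaM (D : XData Ω) : Matrix (Fin 2) (Fin 2) Ω :=
  !![1, 0; 0, D.theta]

/-- The product `T * T' = T Θ T'` on `˜Ω = M₂(Ω)`. -/
def XData.starMul (D : XData Ω) (T T' : Matrix (Fin 2) (Fin 2) Ω) :
    Matrix (Fin 2) (Fin 2) Ω :=
  T * D.ThetaM * T'

/-- `T ∈ ˜Ω` is homogeneous of degree `m`:
`T₁₁ ∈ Ω^m`, `T₁₂, T₂₁ ∈ Ω^{m−1}`, `T₂₂ ∈ Ω^{m−2}`. -/
def XData.Homog (D : XData Ω) (m : ℤ) (T : Matrix (Fin 2) (Fin 2) Ω) : Prop :=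
  T 0 0 ∈ D.G m ∧ T 0 1 ∈ D.G (m - 1) ∧ T 1 0 ∈ D.G (m - 1) ∧ T 1 1 ∈ D.G (m - 2)

/-- The `X`-trick differential `δ` on elements of degree `m`. -/
def XData.deltaOp (D : XData Ω) (m : ℤ) (T : Matrix (Fin 2) (Fin 2) Ω) :
    Matrix (Fin 2) (Fin 2) Ω :=
  !![D.d (T 0 0), D.d (T 0 1); -(D.d (T 1 0)), -(D.d (T 1 1))] +
    !![0, -D.theta; 1, 0] * T +
    ((-1 : ℂ) ^ m) • (T * !![0, 1; -D.theta, 0])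

/-- The functional `Φ(T) = ∫ T₁₁ − (−1)ᵏ ∫ T₂₂ θ` on degree-`k` elements. -/
def XData.Phi (D : XData Ω) (intg : Ω →ₗ[ℂ] ℂ) (k : ℤ)
    (T : Matrix (Fin 2) (Fin 2) Ω) : ℂ :=
  intg (T 0 0) - ((-1 : ℂ) ^ k) * intg (T 1 1 * D.theta)

section Signs

variable {α : Type*} [DivisionRing α]

theorem neg_one_zpow_mul_self (a : ℤ) : (-1 : α) ^ a * (-1 : α) ^ a = 1 := by
  rw [← zpow_add₀ (by norm_num)]
  exact Even.neg_one_zpow ⟨a, rfl⟩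

theorem neg_one_zpow_sub_one (a : ℤ) : (-1 : α) ^ (a - 1) = -(-1 : α) ^ a := by
  rw [zpow_sub_one₀ (by norm_num), inv_neg_one, mul_neg_one]

theorem neg_one_zpow_sub_one_mul_add_one (p q : ℤ) :
    (-1 : α) ^ ((p - 1) * (q + 1)) = -((-1 : α) ^ (p * q) * (-1 : α) ^ (p + q)) := by
  have hodd : (-1 : α) ^ (-(2 * q) - 1) = -1 := Odd.neg_one_zpow ⟨-q - 1, by ring⟩
  rw [show (p - 1) * (q + 1) = p * q + (p + q) + (-(2 * q) - 1) by ring,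
    zpow_add₀ (by norm_num), zpow_add₀ (by norm_num), hodd, mul_neg_one]

end Signs

namespace XData

variable (D : XData Ω)

theorem mul_mem_of_add_eq {j j' n : ℤ} {x y : Ω} (hx : x ∈ D.G j) (hy : y ∈ D.G j')
    (h : j + j' = n) : x * y ∈ D.G n :=
  h ▸ D.mul_mem hx hy

theorem d_mul_theta {j : ℤ} {x : Ω} (hx : x ∈ D.G j) : D.d (x * D.theta) = D.d x * D.theta := by
  rw [D.leibniz hx, D.d_theta, mul_zero, smul_zero, add_zero]

theorem starMul_zero_zero (A B : Matrix (Fin 2) (Fin 2) Ω) :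
    D.starMul A B 0 0 = A 0 0 * B 0 0 + A 0 1 * (D.theta * B 1 0) := by
  simp [starMul, ThetaM, Matrix.mul_apply, Fin.sum_univ_two, mul_assoc]

theorem starMul_one_one_mul_theta (A B : Matrix (Fin 2) (Fin 2) Ω) :
    D.starMul A B 1 1 * D.theta =
      A 1 0 * (B 0 1 * D.theta) + A 1 1 * D.theta * (B 1 1 * D.theta) := by
  simp [starMul, ThetaM, Matrix.mul_apply, Fin.sum_univ_two, add_mul, mul_assoc]

theorem deltaOp_zero_zero (m : ℤ) (S : Matrix (Fin 2) (Fin 2) Ω) :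
    D.deltaOp m S 0 0 =
      D.d (S 0 0) - D.theta * S 1 0 - (-1 : ℂ) ^ m • (S 0 1 * D.theta) := by
  simp [deltaOp, Matrix.mul_apply, Fin.sum_univ_two, Matrix.vecMul, Matrix.vecHead, Matrix.vecTail, dotProduct, sub_eq_add_neg]

theorem deltaOp_one_one (m : ℤ) (S : Matrix (Fin 2) (Fin 2) Ω) :
    D.deltaOp m S 1 1 = -D.d (S 1 1) + S 0 1 + (-1 : ℂ) ^ m • S 1 0 := by
  simp [deltaOp, Matrix.mul_apply, Fin.sum_univ_two, Matrix.vecMul, Matrix.vecHead, Matrix.vecTail, dotProduct]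

def IsGradedTrace (intg : Ω →ₗ[ℂ] ℂ) (k : ℤ) : Prop :=
  ∀ (j : ℤ) (x y : Ω), x ∈ D.G j → y ∈ D.G (k - j) →
    intg (x * y) = (-1 : ℂ) ^ (j * (k - j)) * intg (y * x)

def IsClosedFunctional (intg : Ω →ₗ[ℂ] ℂ) (k : ℤ) : Prop :=
  ∀ x : Ω, x ∈ D.G (k - 1) → intg (D.d x) = 0

variable {D} {intg : Ω →ₗ[ℂ] ℂ} {k : ℤ}

theorem IsGradedTrace.map_mul_comm (h : D.IsGradedTrace intg k) {j j' : ℤ} {x y : Ω}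
    (hx : x ∈ D.G j) (hy : y ∈ D.G j') (hk : j + j' = k) :
    intg (x * y) = (-1 : ℂ) ^ (j * j') * intg (y * x) := by
  obtain rfl : j' = k - j := by omega
  exact h j x y hx hy

theorem IsGradedTrace.map_theta_mul (h : D.IsGradedTrace intg k) {x : Ω} (hx : x ∈ D.G (k - 2)) :
    intg (D.theta * x) = intg (x * D.theta) := by
  rw [h.map_mul_comm D.theta_mem hx (by ring), Even.neg_one_zpow ⟨k - 2, by ring⟩, one_mul]

theorem phi_deltaOp_eq_zero (htrace : D.IsGradedTrace intg k)
    (hclosed : D.IsClosedFunctional intg k) {S : Matrix (Fin 2) (Fin 2) Ω}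
    (hS : D.Homog (k - 1) S) : D.Phi intg k (D.deltaOp (k - 1) S) = 0 := by
  obtain ⟨h00, -, h10, h11⟩ := hS
  have exact00 : intg (D.d (S 0 0)) = 0 := hclosed _ h00
  have exact11 : intg (D.d (S 1 1) * D.theta) = 0 := by
    rw [← D.d_mul_theta h11]
    exact hclosed _ (D.mul_mem_of_add_eq h11 D.theta_mem (by ring))
  have swap10 := htrace.map_theta_mul (x := S 1 0) (by rwa [sub_sub] at h10)
  rw [Phi, deltaOp_zero_zero, deltaOp_one_one]
  simp only [add_mul, neg_mul, smul_mul_assoc, map_add, map_sub, map_neg, map_smul, smul_eq_mul,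
    neg_one_zpow_sub_one]
  linear_combination exact00 - swap10 + (-1 : ℂ) ^ k * exact11 +
    intg (S 1 0 * D.theta) * neg_one_zpow_mul_self (α := ℂ) k

theorem phi_starMul_comm (htrace : D.IsGradedTrace intg k) {p q : ℤ}
    {T T' : Matrix (Fin 2) (Fin 2) Ω} (hpq : p + q = k) (hT : D.Homog p T) (hT' : D.Homog q T') :
    D.Phi intg k (D.starMul T T') = (-1 : ℂ) ^ (p * q) * D.Phi intg k (D.starMul T' T) := by
  obtain ⟨a00, a01, a10, a11⟩ := hT
  obtain ⟨b00, b01, b10, b11⟩ := hT'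
  have hθ := D.theta_mem
  have off_sign := neg_one_zpow_sub_one_mul_add_one (α := ℂ) p q
  rw [hpq] at off_sign
  have swap00 := htrace.map_mul_comm a00 b00 hpq
  have swap01 := htrace.map_mul_comm a01 (D.mul_mem_of_add_eq hθ b10 (n := q + 1) (by ring)) (by omega)
  have swapθ := htrace.map_theta_mul (D.mul_mem_of_add_eq b10 a01 (by omega))
  have swap10 := htrace.map_mul_comm a10 (D.mul_mem_of_add_eq b01 hθ (n := q + 1) (by ring)) (by omega)
  have swap11 := htrace.map_mul_comm (D.mul_mem_of_add_eq a11 hθ (by ring))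
    (D.mul_mem_of_add_eq b11 hθ (by ring)) hpq
  rw [off_sign] at swap01 swap10
  simp only [mul_assoc] at swap01 swapθ swap10 swap11 ⊢
  rw [swapθ] at swap01
  rw [Phi, Phi, starMul_zero_zero, starMul_one_one_mul_theta, starMul_zero_zero,
    starMul_one_one_mul_theta]
  simp only [mul_assoc, map_add]
  linear_combination swap00 + swap01 - (-1 : ℂ) ^ k * swap10 - (-1 : ℂ) ^ k * swap11 +
    (-1 : ℂ) ^ (p * q) * intg (T' 0 1 * (D.theta * T 1 0)) * neg_one_zpow_mul_self (α := ℂ) k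

end XData

/-- if `∫` is a closed graded trace on `Ω` (in degree `k`), then
`Φ(T) = ∫ T₁₁ − (−1)^m ∫ T₂₂ θ` is a closed graded trace on `(˜Ω, *, δ)`. -/
theorem stmt16 (D : XData Ω) (k : ℤ) (intg : Ω →ₗ[ℂ] ℂ)
    (htrace : ∀ (j : ℤ) (x y : Ω), x ∈ D.G j → y ∈ D.G (k - j) →
      intg (x * y) = ((-1 : ℂ) ^ (j * (k - j))) * intg (y * x))
    (hclosed : ∀ x : Ω, x ∈ D.G (k - 1) → intg (D.d x) = 0) :
    (∀ S : Matrix (Fin 2) (Fin 2) Ω, D.Homog (k - 1) S →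
      D.Phi intg k (D.deltaOp (k - 1) S) = 0)
    ∧ (∀ (p q : ℤ) (T T' : Matrix (Fin 2) (Fin 2) Ω), p + q = k →
      D.Homog p T → D.Homog q T' →
      D.Phi intg k (D.starMul T T') =
        ((-1 : ℂ) ^ (p * q)) * D.Phi intg k (D.starMul T' T)) :=
  ⟨fun _ hS => XData.phi_deltaOp_eq_zero htrace hclosed hS,
    fun _ _ _ _ hpq hT hT' => XData.phi_starMul_comm htrace hpq hT hT'⟩

end

end XTrick
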